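/- For every integer n ≥ 0, the graph R̃_n is isomorphic to the suspension graph S(n+2, 2). -/

import Mathlib

/-- The complete bridge graph `B_{m,n}` on vertex set `Fin (m+n)` (0-indexed version of the
paper's `{1, …, m+n}`): vertices `0, …, m-1` form a complete graph `K_m`, vertices
`m, …, m+n-1` form a complete graph `K_n`, and the only further edge is the bridge joining
vertex `m-1` (the paper's vertex `m`) to vertex `m` (the paper's vertex `m+1`). -/
def bridgeGraph (m n : ℕ) : SimpleGraph (Fin (m + n)) :=
  SimpleGraph.fromRel (fun i j =>
    ((i : ℕ) < m ∧ (j : ℕ) < m) ∨ (m ≤ (i : ℕ) ∧ m ≤ (j : ℕ)) ∨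
      ((i : ℕ) + 1 = m ∧ (j : ℕ) = m))

instance (m n : ℕ) : DecidableRel (bridgeGraph m n).Adj := fun i j =>
  decidable_of_iff (i ≠ j ∧
      ((((i : ℕ) < m ∧ (j : ℕ) < m) ∨ (m ≤ (i : ℕ) ∧ m ≤ (j : ℕ)) ∨
        ((i : ℕ) + 1 = m ∧ (j : ℕ) = m)) ∨
       (((j : ℕ) < m ∧ (i : ℕ) < m) ∨ (m ≤ (j : ℕ) ∧ m ≤ (i : ℕ)) ∨
        ((j : ℕ) + 1 = m ∧ (i : ℕ) = m)))) Iff.rfl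

/-- The suspension graph `S(m,n)`: the complete bridge graph `B_{m,n}` (on the vertices with
value `< m + n`) together with one new vertex (the vertex with value `m + n`) joined to every
vertex of `B_{m,n}` except the two bridge vertices (the paper's vertices `m` and `m+1`, i.e.
the Lean vertices with values `m-1` and `m`). -/
def suspGraph (m n : ℕ) : SimpleGraph (Fin (m + n + 1)) :=
  SimpleGraph.fromRel (fun i j =>
    ((i : ℕ) < m + n ∧ (j : ℕ) < m + n ∧
      (((i : ℕ) < m ∧ (j : ℕ) < m) ∨ (m ≤ (i : ℕ) ∧ m ≤ (j : ℕ)) ∨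
        ((i : ℕ) + 1 = m ∧ (j : ℕ) = m))) ∨
    ((i : ℕ) = m + n ∧ (j : ℕ) < m + n ∧ (j : ℕ) + 1 ≠ m ∧ (j : ℕ) ≠ m))

instance (m n : ℕ) : DecidableRel (suspGraph m n).Adj := fun i j =>
  decidable_of_iff (i ≠ j ∧
    ((((i : ℕ) < m + n ∧ (j : ℕ) < m + n ∧
      (((i : ℕ) < m ∧ (j : ℕ) < m) ∨ (m ≤ (i : ℕ) ∧ m ≤ (j : ℕ)) ∨
        ((i : ℕ) + 1 = m ∧ (j : ℕ) = m))) ∨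
     ((i : ℕ) = m + n ∧ (j : ℕ) < m + n ∧ (j : ℕ) + 1 ≠ m ∧ (j : ℕ) ≠ m)) ∨
     (((j : ℕ) < m + n ∧ (i : ℕ) < m + n ∧
      (((j : ℕ) < m ∧ (i : ℕ) < m) ∨ (m ≤ (j : ℕ) ∧ m ≤ (i : ℕ)) ∨
        ((j : ℕ) + 1 = m ∧ (i : ℕ) = m))) ∨
     ((j : ℕ) = m + n ∧ (i : ℕ) < m + n ∧ (i : ℕ) + 1 ≠ m ∧ (i : ℕ) ≠ m)))) Iff.rfl

/-- The 5-cycle `C₅` on `Fin 5`. -/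
def cycle5 : SimpleGraph (Fin 5) :=
  SimpleGraph.fromRel (fun i j => j = i + 1)

instance : DecidableRel cycle5.Adj := fun i j =>
  decidable_of_iff (i ≠ j ∧ (j = i + 1 ∨ i = j + 1)) Iff.rfl

/-- Duplicating the vertex `v'` of a simple graph `G`: a new vertex (the `Sum.inr` vertex) is
added, adjacent to `v'` and to every neighbor of `v'` in `G`. -/
def dupGraph {V : Type*} (G : SimpleGraph V) (v' : V) : SimpleGraph (V ⊕ Unit) where
  Adj x y :=
    match x, y with
    | Sum.inl a, Sum.inl b => G.Adj a b
    | Sum.inl a, Sum.inr _ => a = v' ∨ G.Adj a v'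
    | Sum.inr _, Sum.inl b => b = v' ∨ G.Adj b v'
    | Sum.inr _, Sum.inr _ => False
  symm := by
    constructor
    rintro (a | a) (b | b) h
    · exact G.symm.symm _ _ h
    · exact h
    · exact h
    · exact h.elim
  loopless := by
    constructor
    rintro (a | a) h
    · exact G.loopless.irrefl a h
    · exact h.elim

instance dupGraphAdjDecidable {V : Type*} [DecidableEq V] (G : SimpleGraph V)
    [DecidableRel G.Adj] (v' : V) : DecidableRel (dupGraph G v').Adj := fun x y =>
  match x, y with
  | Sum.inl a, Sum.inl b => inferInstanceAs (Decidable (G.Adj a b))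
  | Sum.inl a, Sum.inr _ => inferInstanceAs (Decidable (a = v' ∨ G.Adj a v'))
  | Sum.inr _, Sum.inl b => inferInstanceAs (Decidable (b = v' ∨ G.Adj b v'))
  | Sum.inr _, Sum.inr _ => inferInstanceAs (Decidable False)

/-- The vertex type of the reseminant graph built from `C₅` by the duplications recorded in
the list `l` (each entry records which of the five original cycle vertices is duplicated). -/
def resemType : List (Fin 5) → Type
  | [] => Fin 5
  | _ :: l => resemType l ⊕ Unit

instance resemTypeFintype : ∀ l : List (Fin 5), Fintype (resemType l)
  | [] => inferInstanceAs (Fintype (Fin 5))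
  | _ :: l => letI := resemTypeFintype l; inferInstanceAs (Fintype (resemType l ⊕ Unit))

instance resemTypeDecEq : ∀ l : List (Fin 5), DecidableEq (resemType l)
  | [] => inferInstanceAs (DecidableEq (Fin 5))
  | _ :: l => letI := resemTypeDecEq l; inferInstanceAs (DecidableEq (resemType l ⊕ Unit))

/-- The copy, inside `resemType l`, of an original vertex of the 5-cycle. -/
def origVert : (l : List (Fin 5)) → Fin 5 → resemType l
  | [], i => i
  | _ :: l, i => Sum.inl (origVert l i)

/-- The reseminant graph obtained from the 5-cycle `C₅` by the finite sequence of vertex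
duplications recorded in `l`: for `l = v :: l'`, the vertex (the copy of the original cycle
vertex) `v` is duplicated in the graph built from `l'`. -/
def resemGraph : (l : List (Fin 5)) → SimpleGraph (resemType l)
  | [] => cycle5
  | v :: l => dupGraph (resemGraph l) (origVert l v)

instance resemGraphAdjDecidable : ∀ l : List (Fin 5), DecidableRel (resemGraph l).Adj
  | [] => inferInstanceAs (DecidableRel cycle5.Adj)
  | v :: l =>
    letI := resemGraphAdjDecidable l
    inferInstanceAs (DecidableRel (dupGraph (resemGraph l) (origVert l v)).Adj)

/-- A simple graph is *reseminant* if it is (isomorphic to) a graph obtained from the 5-cycle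
`C₅` by a finite sequence of vertex duplications, each duplicating one of the five original
cycle vertices. -/
def IsReseminant {V : Type*} (Γ : SimpleGraph V) : Prop :=
  ∃ l : List (Fin 5), Nonempty (Γ ≃g resemGraph l)

/-- `R̃_n`: the reseminant graph on `n + 5` vertices obtained from `C₅` by `n` successive
duplications, all duplicating the same fixed vertex `0` of the original 5-cycle. -/
def tildeR (n : ℕ) : SimpleGraph (resemType (List.replicate n 0)) :=
  resemGraph (List.replicate n 0)

/-! Vertex `0` of `C₅ = S(2,2)` is a vertex of the clique `K_2` other than the bridge vertex.
Such a vertex of `S(m,2)` is adjacent exactly to the rest of `K_m` and to the apex, so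
duplicating it just enlarges the clique: the result is `S(m+1,2)`, and the duplicated vertex is
again a non-bridge vertex of the new clique. Induction on `n` finishes. -/

def dupGraphCongr {V W : Type*} {G : SimpleGraph V} {H : SimpleGraph W} (e : G ≃g H) (v : V) :
    dupGraph G v ≃g dupGraph H (e v) where
  toEquiv := e.toEquiv.sumCongr (Equiv.refl Unit)
  map_rel_iff' := by
    rintro (a | a) (b | b)
    · exact e.map_rel_iff
    · exact or_congr e.injective.eq_iff e.map_rel_iff
    · exact or_congr e.injective.eq_iff e.map_rel_iff
    · exact Iff.rfl

section suspension

variable {m n : ℕ}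

theorem suspGraph_adj_succ_succ {i j : ℕ} (hi : i < m + n + 1) (hj : j < m + n + 1) :
    (suspGraph (m + 1) n).Adj ⟨i + 1, by omega⟩ ⟨j + 1, by omega⟩ ↔
      (suspGraph m n).Adj ⟨i, hi⟩ ⟨j, hj⟩ := by
  simp only [suspGraph, SimpleGraph.fromRel_adj, ne_eq, Fin.ext_iff]
  omega

theorem suspGraph_adj_zero_succ_iff {v : Fin (m + n + 1)} (hv : (v : ℕ) + 2 ≤ m) {j : ℕ}
    (hj : j < m + n + 1) :
    (suspGraph (m + 1) n).Adj ⟨0, by omega⟩ ⟨j + 1, by omega⟩ ↔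
      ⟨j, hj⟩ = v ∨ (suspGraph m n).Adj ⟨j, hj⟩ v := by
  simp only [suspGraph, SimpleGraph.fromRel_adj, ne_eq, Fin.ext_iff]
  omega

def dupSuspEquiv (m n : ℕ) : Fin (m + n + 1) ⊕ Unit ≃ Fin (m + 1 + n + 1) where
  toFun := Sum.elim (fun i => ⟨i + 1, by omega⟩) (fun _ => ⟨0, by omega⟩)
  invFun j := if h : (j : ℕ) = 0 then Sum.inr () else Sum.inl ⟨j - 1, by omega⟩
  left_inv := by
    rintro (i | _) <;> simp
  right_inv j := by
    by_cases h : (j : ℕ) = 0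
    · simp [h, Fin.ext_iff]
    · simp only [h, ↓reduceDIte, Sum.elim_inl, Fin.ext_iff]
      omega

def dupSuspIso (v : Fin (m + n + 1)) (hv : (v : ℕ) + 2 ≤ m) :
    dupGraph (suspGraph m n) v ≃g suspGraph (m + 1) n where
  toEquiv := dupSuspEquiv m n
  map_rel_iff' := by
    rintro (⟨a, ha⟩ | _) (⟨b, hb⟩ | _)
    · exact suspGraph_adj_succ_succ ha hb
    · exact ((suspGraph (m + 1) n).adj_comm _ _).trans (suspGraph_adj_zero_succ_iff hv ha)
    · exact suspGraph_adj_zero_succ_iff hv hb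
    · exact iff_of_false (suspGraph (m + 1) n).irrefl id

end suspension

def cycle5IsoSuspGraph : cycle5 ≃g suspGraph 2 2 where
  toEquiv := Equiv.refl _
  map_rel_iff' := by decide

/-- The duplicates of vertex `0` of `C₅` fill the clique in front of it, so it ends up at `n`. -/
theorem exists_iso_tildeR_suspGraph (n : ℕ) :
    ∃ e : tildeR n ≃g suspGraph (n + 2) 2, (e (origVert (List.replicate n 0) 0) : ℕ) = n := by
  induction n with
  | zero => exact ⟨cycle5IsoSuspGraph, rfl⟩
  | succ n ih =>
    obtain ⟨e, he⟩ := ih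
    have hv : (e (origVert (List.replicate n 0) 0) : ℕ) + 2 ≤ n + 2 := by omega
    exact ⟨(dupGraphCongr e _).trans (dupSuspIso _ hv), congrArg (· + 1) he⟩

/-- For every integer `n ≥ 0`, the graph `R̃_n` is isomorphic to the
suspension graph `S(n+2, 2)`. -/
theorem tildeR_iso_suspGraph (n : ℕ) :
    Nonempty (tildeR n ≃g suspGraph (n + 2) 2) :=
  let ⟨e, _⟩ := exists_iso_tildeR_suspGraph n
  ⟨e⟩
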